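/- Let (Σ, I) be a trace alphabet. For finite words u, v over Σ, the following are equivalent: (1) u ≈ v, i.e., u↾p = v↾p for every D-clique p; (2) v can be obtained from u by a finite sequence of swaps of adjacent independent letters, i.e., u and v are related by the equivalence relation generated by the relation that identifies x·a·b·y with x·b·a·y whenever (a, b) ∈ I. In other words, trace equivalence defined by projections onto D-cliques coincides with the congruence generated by commuting adjacent independent letters. -/

import Mathlib

/- Projection of a finite word onto a set of letters: delete all letters not in `p`. -/
open Classical in
noncomputable def proj {A : Type*} (p : Set A) : List A → List A
  | [] => []
  | a :: u => if a ∈ p then a :: proj p u else proj p u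

/-- `p` is a `D`-clique for the dependence relation `D = (Σ×Σ) \ I`:
all pairs of letters of `p` are dependent, i.e. not independent. -/
def IsDClique {A : Type*} (I : A → A → Prop) (p : Set A) : Prop :=
  ∀ a ∈ p, ∀ b ∈ p, ¬ I a b

/-- Trace equivalence of finite words: equal projections onto every `D`-clique. -/
def TraceEquiv {A : Type*} (I : A → A → Prop) (u v : List A) : Prop :=
  ∀ p : Set A, IsDClique I p → proj p u = proj p v

/-- One swap of two adjacent independent letters. -/
def SwapRel {A : Type*} (I : A → A → Prop) (u v : List A) : Prop :=
  ∃ (x y : List A) (a b : A), I a b ∧ u = x ++ a :: b :: y ∧ v = x ++ b :: a :: y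

/-!
Swapping adjacent independent letters does not change any projection onto a `D`-clique, since
such a clique contains at most one of the two letters. Conversely, let `a :: u ≈ v`. Projecting
onto `{a}` shows that `a` occurs in `v`; write `v = x ++ a :: y` with `a ∉ x`. Each letter `b`
of `x` is independent of `a`: otherwise `{a, b}` is a `D`-clique and the projection of `v` onto
it starts with a letter of `x`, whereas that of `a :: u` starts with `a`. Hence `a` can be swapped
to the front of `v`, and cancelling it leaves `u ≈ x ++ y`, so induction on `u` applies.
-/

open Relation

section Projection

variable {A : Type*} (p : Set A)

@[simp]
lemma proj_append (x y : List A) : proj p (x ++ y) = proj p x ++ proj p y := by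
  induction x with
  | nil => simp [proj]
  | cons a x ih => simp only [List.cons_append, proj]; split <;> simp [ih]

@[simp]
lemma mem_proj {u : List A} {a : A} : a ∈ proj p u ↔ a ∈ u ∧ a ∈ p := by
  induction u with
  | nil => simp [proj]
  | cons b u ih =>
    simp only [proj]
    split <;> simp only [List.mem_cons, ih] <;> grind

lemma proj_cons_of_mem {a : A} (ha : a ∈ p) (u : List A) : proj p (a :: u) = a :: proj p u := by
  simp [proj, ha]

lemma proj_cons_of_notMem {a : A} (ha : a ∉ p) (u : List A) : proj p (a :: u) = proj p u := by
  simp [proj, ha]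

lemma proj_eq_nil_of_forall_notMem {u : List A} (h : ∀ a ∈ u, a ∉ p) : proj p u = [] :=
  List.eq_nil_iff_forall_not_mem.2 fun a ha => h a ((mem_proj p).1 ha).1 ((mem_proj p).1 ha).2

end Projection

section Swaps

variable {A : Type*} {I : A → A → Prop}

lemma isDClique_singleton (hirr : ∀ a, ¬ I a a) (a : A) : IsDClique I {a} := by
  rintro b rfl c rfl
  exact hirr _

lemma isDClique_pair (hirr : ∀ a, ¬ I a a) {a b : A} (hab : ¬ SymmGen I a b) :
    IsDClique I {a, b} := by
  simp only [IsDClique, Set.mem_insert_iff, Set.mem_singleton_iff, SymmGen] at hab ⊢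
  rintro c (rfl | rfl) d (rfl | rfl) <;> grind

lemma SwapRel.proj_eq {u v : List A} (h : SwapRel I u v) {p : Set A} (hp : IsDClique I p) :
    proj p u = proj p v := by
  obtain ⟨x, y, a, b, hab, rfl, rfl⟩ := h
  by_cases ha : a ∈ p <;> by_cases hb : b ∈ p
  · exact absurd hab (hp a ha b hb)
  all_goals simp [proj, ha, hb]

lemma SwapRel.cons (a : A) {u v : List A} (h : SwapRel I u v) : SwapRel I (a :: u) (a :: v) := by
  obtain ⟨x, y, b, c, hbc, rfl, rfl⟩ := h
  exact ⟨a :: x, y, b, c, hbc, rfl, rfl⟩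

lemma eqvGen_swapRel_cons (a : A) {u v : List A} (h : EqvGen (SwapRel I) u v) :
    EqvGen (SwapRel I) (a :: u) (a :: v) := by
  induction h with
  | rel u v h => exact .rel _ _ (h.cons a)
  | refl u => exact .refl _
  | symm u v _ ih => exact .symm _ _ ih
  | trans u v w _ _ ihuv ihvw => exact .trans _ _ _ ihuv ihvw

lemma eqvGen_swapRel_cons_append {a : A} {x : List A} (hx : ∀ b ∈ x, SymmGen I a b)
    (y : List A) : EqvGen (SwapRel I) (a :: (x ++ y)) (x ++ a :: y) := by
  induction x with
  | nil => exact .refl _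
  | cons b x ih =>
    have hswap : SymmGen (SwapRel I) (a :: b :: (x ++ y)) (b :: a :: (x ++ y)) := by
      rcases hx b List.mem_cons_self with hab | hba
      · exact .of_rel ⟨[], _, a, b, hab, rfl, rfl⟩
      · exact .of_rel_symm ⟨[], _, b, a, hba, rfl, rfl⟩
    exact .trans _ _ _ (EqvGen.symmGen_le_eqvGen _ _ _ hswap)
      (eqvGen_swapRel_cons b (ih fun c hc => hx c (List.mem_cons_of_mem b hc)))

end Swaps

namespace TraceEquiv

variable {A : Type*} {I : A → A → Prop}

variable (I) in
lemma equivalence : Equivalence (TraceEquiv I) where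
  refl _ _ _ := rfl
  symm h p hp := (h p hp).symm
  trans huv hvw p hp := (huv p hp).trans (hvw p hp)

lemma of_eqvGen {u v : List A} (h : EqvGen (SwapRel I) u v) : TraceEquiv I u v :=
  (equivalence I).eqvGen_iff.1 <| EqvGen.mono (fun _ _ hs _ hp => SwapRel.proj_eq hs hp) _ _ h

lemma mem_iff (hirr : ∀ a, ¬ I a a) {u v : List A} (h : TraceEquiv I u v) (a : A) :
    a ∈ u ↔ a ∈ v := by
  simpa using congrArg (a ∈ ·) (h {a} (isDClique_singleton hirr a))

lemma symmGen_of_cons_append (hirr : ∀ a, ¬ I a a) {a : A} {u x y : List A}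
    (h : TraceEquiv I (a :: u) (x ++ a :: y)) (hax : a ∉ x) : ∀ b ∈ x, SymmGen I a b := by
  intro b hbx
  by_contra hab
  have hproj := h {a, b} (isDClique_pair hirr hab)
  rw [proj_cons_of_mem _ (by simp), proj_append, proj_cons_of_mem _ (by simp),
    List.cons_eq_append_iff] at hproj
  rcases hproj with ⟨hnil, -⟩ | ⟨z, hz, -⟩
  · exact List.not_mem_nil (hnil ▸ (mem_proj _).2 ⟨hbx, Or.inr rfl⟩)
  · exact hax ((mem_proj _).1 (hz ▸ List.mem_cons_self)).1

lemma of_cons_append {a : A} {u x y : List A} (h : TraceEquiv I (a :: u) (x ++ a :: y))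
    (hx : ∀ b ∈ x, SymmGen I a b) : TraceEquiv I u (x ++ y) := by
  intro p hp
  have hproj := h p hp
  by_cases ha : a ∈ p
  · have hxp : proj p x = [] := proj_eq_nil_of_forall_notMem p fun b hb hbp =>
      (hx b hb).elim (hp a ha b hbp) (hp b hbp a ha)
    simpa [proj_cons_of_mem p ha, hxp] using hproj
  · simpa [proj_cons_of_notMem p ha] using hproj

end TraceEquiv

theorem stmt5_general {A : Type*} (I : A → A → Prop)
    (hirr : ∀ a, ¬ I a a)
    (u v : List A) :
    TraceEquiv I u v ↔ Relation.EqvGen (SwapRel I) u v := by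
  refine ⟨fun h => ?_, TraceEquiv.of_eqvGen⟩
  induction u generalizing v with
  | nil =>
    obtain rfl : v = [] := List.eq_nil_iff_forall_not_mem.2 fun a hav =>
      List.not_mem_nil ((h.mem_iff hirr a).2 hav)
    exact .refl _
  | cons a u ih =>
    obtain ⟨x, y, rfl, hax⟩ :=
      List.eq_append_cons_of_mem ((h.mem_iff hirr a).1 List.mem_cons_self)
    have hx := h.symmGen_of_cons_append hirr hax
    exact .trans _ _ _ (eqvGen_swapRel_cons a (ih _ (h.of_cons_append hx)))
      (eqvGen_swapRel_cons_append hx y)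

/-- trace equivalence (defined by projections onto `D`-cliques) coincides
with the equivalence relation generated by swapping adjacent independent letters. -/
theorem stmt5 {A : Type*} [Fintype A] (I : A → A → Prop)
    (hirr : ∀ a, ¬ I a a) (hsym : ∀ a b, I a b → I b a)
    (u v : List A) :
    TraceEquiv I u v ↔ Relation.EqvGen (SwapRel I) u v :=
  stmt5_general I hirr u v
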